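/- Let u : ℝⁿ → ℝ be continuous and suppose that for some fixed a > 0, for every unit vector e ∈ ℝ^{n−1}×{0} and every y ∈ ℝⁿ₊ with y·e < a, one has u(y) ≥ u(y − 2(y·e − a)e). If this holds for every a > 0, then u(y',yₙ) depends only on (|y'|, yₙ), and r ↦ u restricted to rays in y' is nonincreasing in |y'|. -/

import Mathlib

/-!
If `‖y‖ ≤ ‖z‖` and `z - y` is horizontal, the reflection across the perpendicular bisector
of `[y, z]` maps `y` to `z`, and that bisector is the plane `⟪·, e⟫ = a₀` with
`e = (z - y) / ‖z - y‖` horizontal and `a₀ = (‖z‖² - ‖y‖²) / (2 ‖z - y‖) ≥ 0`. The hypothesis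
only covers `a > 0`, so `u z ≤ u y` follows by letting `a ↓ a₀` and using continuity of `u`.
Applying this in both directions gives the symmetry.
-/

open scoped RealInnerProductSpace

section PlaneReflection

variable {E : Type*} [NormedAddCommGroup E] [InnerProductSpace ℝ E]

/-- The reflection across the hyperplane `⟪·, e⟫ = a`, for a unit vector `e`. -/
def planeReflection (e : E) (a : ℝ) (y : E) : E :=
  y - (2 * (⟪y, e⟫ - a)) • e

theorem continuous_planeReflection_level (e y : E) :
    Continuous fun a : ℝ => planeReflection e a y := by
  unfold planeReflection
  fun_prop

theorem planeReflection_bisector (e y : E) (d : ℝ) :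
    planeReflection e (⟪y, e⟫ + d / 2) y = y + d • e := by
  rw [planeReflection, sub_eq_add_neg, ← neg_smul]
  congr 2
  ring

theorem le_of_forall_planeReflection_le {u : E → ℝ} (hu : Continuous u) {e y : E} {d : ℝ}
    (hd : 0 < d) (he : ‖e‖ = 1) (hnorm : ‖y‖ ≤ ‖y + d • e‖)
    (hrefl : ∀ a, 0 < a → ⟪y, e⟫ < a → u (planeReflection e a y) ≤ u y) :
    u (y + d • e) ≤ u y := by
  set a₀ := ⟪y, e⟫ + d / 2 with ha₀_def
  have ha₀ : 0 ≤ a₀ := by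
    have hsq : ‖y + d • e‖ ^ 2 = ‖y‖ ^ 2 + 2 * d * a₀ := by
      rw [norm_add_sq_real, real_inner_smul_right, norm_smul, he, Real.norm_of_nonneg hd.le]
      ring
    have : ‖y‖ ^ 2 ≤ ‖y + d • e‖ ^ 2 := by gcongr
    nlinarith
  have hlim : Filter.Tendsto (fun a => u (planeReflection e a y)) (nhdsWithin a₀ (Set.Ioi a₀))
      (nhds (u (y + d • e))) := by
    rw [← planeReflection_bisector e y d]
    exact ((hu.comp (continuous_planeReflection_level e y)).tendsto a₀).mono_left
      nhdsWithin_le_nhds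
  refine le_of_tendsto hlim (eventually_nhdsWithin_of_forall fun a (ha : a₀ < a) => ?_)
  exact hrefl a (by linarith) (by linarith [ha₀_def])

end PlaneReflection

theorem le_of_planeReflection_horizontal {n : ℕ} (i : Fin n)
    {u : EuclideanSpace ℝ (Fin n) → ℝ} (hu : Continuous u)
    (hrefl : ∀ a : ℝ, 0 < a → ∀ e : EuclideanSpace ℝ (Fin n), ‖e‖ = 1 → e i = 0 →
      ∀ y : EuclideanSpace ℝ (Fin n), 0 < y i → ⟪y, e⟫ < a → u (planeReflection e a y) ≤ u y)
    {y z : EuclideanSpace ℝ (Fin n)} (hy : 0 < y i) (hz : z i = y i) (hyz : ‖y‖ ≤ ‖z‖) :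
    u z ≤ u y := by
  rcases eq_or_ne z y with rfl | hne
  · rfl
  set d := ‖z - y‖
  have hd : 0 < d := norm_pos_iff.mpr (sub_ne_zero.mpr hne)
  set e := d⁻¹ • (z - y)
  have he : ‖e‖ = 1 := by
    rw [norm_smul, norm_inv, Real.norm_of_nonneg hd.le, inv_mul_cancel₀ hd.ne']
  have he_horizontal : e i = 0 := by simp [e, hz]
  have hz_eq : z = y + d • e := by
    rw [smul_inv_smul₀ hd.ne', add_sub_cancel]
  rw [hz_eq] at hyz ⊢
  exact le_of_forall_planeReflection_le hu hd he hyz (fun a ha => hrefl a ha e he he_horizontal y hy)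

/-- If a continuous function satisfies the plane-reflection inequalities obtained from the
moving spheres method (for every horizontal unit direction `e` and every level `a > 0`),
then on the upper half-space it is axially symmetric in `y'` and nonincreasing in `|y'|`. -/
theorem stmt13 (n : ℕ) (hn : 3 ≤ n) (u : EuclideanSpace ℝ (Fin n) → ℝ)
    (hcont : Continuous u)
    (hrefl : ∀ a : ℝ, 0 < a → ∀ e : EuclideanSpace ℝ (Fin n),
      ‖e‖ = 1 → e ⟨n - 1, by omega⟩ = 0 →
      ∀ y : EuclideanSpace ℝ (Fin n), 0 < y ⟨n - 1, by omega⟩ → ⟪y, e⟫ < a →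
        u (y - (2 * (⟪y, e⟫ - a)) • e) ≤ u y) :
    (∀ y z : EuclideanSpace ℝ (Fin n), 0 < y ⟨n - 1, by omega⟩ →
      z ⟨n - 1, by omega⟩ = y ⟨n - 1, by omega⟩ →
      ‖z‖ ^ 2 - z ⟨n - 1, by omega⟩ ^ 2 = ‖y‖ ^ 2 - y ⟨n - 1, by omega⟩ ^ 2 →
      u z = u y) ∧
    (∀ y z : EuclideanSpace ℝ (Fin n), 0 < y ⟨n - 1, by omega⟩ →
      z ⟨n - 1, by omega⟩ = y ⟨n - 1, by omega⟩ →
      ‖y‖ ^ 2 - y ⟨n - 1, by omega⟩ ^ 2 ≤ ‖z‖ ^ 2 - z ⟨n - 1, by omega⟩ ^ 2 →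
      u z ≤ u y) := by
  have key := @le_of_planeReflection_horizontal n ⟨n - 1, by omega⟩ u hcont hrefl
  constructor
  · intro y z hy hz h
    rw [hz, sub_left_inj, sq_eq_sq₀ (norm_nonneg _) (norm_nonneg _)] at h
    exact le_antisymm (key hy hz h.ge) (key (hz ▸ hy) hz.symm h.le)
  · intro y z hy hz h
    rw [hz, sub_le_sub_iff_right, sq_le_sq₀ (norm_nonneg _) (norm_nonneg _)] at h
    exact key hy hz h
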